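/- Under Assumptions A2 and A7a, every trajectory of the general higher-order SIS map F with x_i(0) ∈ [0,1] for all i satisfies x_i(t) ∈ [0,1] for all i ∈ {1,…,n} and all t ≥ 0; that is, [0,1]^n is positively invariant under F. -/

import Mathlib

open Finset Filter

/-- Spectral radius of a real square matrix: the maximum modulus of its complex
eigenvalues (elements of the spectrum of the matrix viewed over `ℂ`). -/
noncomputable def specRad {n : ℕ} (M : Matrix (Fin n) (Fin n) ℝ) : ℝ :=
  sSup ((fun z => ‖z‖) '' spectrum ℂ (M.map (fun a => (a : ℂ))))

/-- A nonnegative matrix is irreducible: there is no nonempty proper subset `S` of the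
index set with `M i j = 0` for all `i ∈ S` and `j ∉ S`. -/
def MatIrred {n : ℕ} (M : Matrix (Fin n) (Fin n) ℝ) : Prop :=
  ∀ S : Set (Fin n), S.Nonempty → S ≠ Set.univ → ∃ i ∈ S, ∃ j, j ∉ S ∧ M i j ≠ 0

/-- Irreducibility of an order-`k` array `T_k` (entries `β_{i i₁ … i_{k−1}}`,
here `Tk i v` with `v : Fin (k−1) → Fin n` listing the trailing indices): there is no
nonempty proper subset `S` with `Tk i v = 0` for all `i ∈ S` and all trailing indices
outside `S`. -/
def TensIrredK {n : ℕ} (k : ℕ) (Tk : Fin n → (Fin (k - 1) → Fin n) → ℝ) : Prop :=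
  ∀ S : Set (Fin n), S.Nonempty → S ≠ Set.univ →
    ∃ i ∈ S, ∃ v : Fin (k - 1) → Fin n, (∀ m, v m ∉ S) ∧ Tk i v ≠ 0

/-- The general higher-order discrete-time SIS map:
`F(x)_i = x_i + h(−δ_i x_i + (1 − x_i)(Σ_j β_{ij} x_j +
Σ_{k=3}^n Σ_{i₁,…,i_{k−1}} β_{i i₁ … i_{k−1}} x_{i₁} ⋯ x_{i_{k−1}}))`,
where the order-`k` array is `T k` and `T k i v` is the entry with tail `i` and
trailing indices `v : Fin (k−1) → Fin n`. -/
noncomputable def hoSIS {n : ℕ} (h : ℝ) (δ : Fin n → ℝ) (B : Matrix (Fin n) (Fin n) ℝ)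
    (T : (k : ℕ) → Fin n → (Fin (k - 1) → Fin n) → ℝ) (x : Fin n → ℝ) : Fin n → ℝ :=
  fun i => x i + h * (-(δ i * x i) + (1 - x i) * ((∑ j, B i j * x j) +
    ∑ k ∈ Finset.Icc 3 n, ∑ v : Fin (k - 1) → Fin n, T k i v * ∏ m, x (v m)))

/-- `x` is a trajectory of the discrete-time system `x(t+1) = F(x(t))`. -/
def IsTraj {n : ℕ} (F : (Fin n → ℝ) → Fin n → ℝ) (x : ℕ → Fin n → ℝ) : Prop :=
  ∀ t, x (t + 1) = F (x t)

/-- Membership in the cube `[0,1]^n`. -/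
def InCube {n : ℕ} (y : Fin n → ℝ) : Prop := ∀ i, y i ∈ Set.Icc (0 : ℝ) 1

/-- Local asymptotic stability (max-norm) of an equilibrium `xb`, for trajectories
starting in `[0,1]^n`. -/
def LocAsympStable {n : ℕ} (F : (Fin n → ℝ) → Fin n → ℝ) (xb : Fin n → ℝ) : Prop :=
  ∀ ε > 0, ∃ d > 0, ∀ x : ℕ → Fin n → ℝ, IsTraj F x → InCube (x 0) → ‖x 0 - xb‖ < d →
    (∀ t, ‖x t - xb‖ < ε) ∧ Tendsto x atTop (nhds xb)

/-- Instability (max-norm) of an equilibrium `xb`, for trajectories starting in `[0,1]^n`. -/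
def Unstable {n : ℕ} (F : (Fin n → ℝ) → Fin n → ℝ) (xb : Fin n → ℝ) : Prop :=
  ∃ ε > 0, ∀ d > 0, ∃ x : ℕ → Fin n → ℝ, IsTraj F x ∧ InCube (x 0) ∧ ‖x 0 - xb‖ < d ∧
    ∃ t, ε ≤ ‖x t - xb‖

/-
Coordinatewise, `F(x)_i = (1 − h δ_i) x_i + (1 − x_i) · h S_i(x)`, which lies between `0`
and `x_i + (1 − x_i) = 1` as soon as `x_i`, `h δ_i` and `h S_i(x)` lie in `[0, 1]`. The
infection pressure `S_i(x)` is monotone in `x ≥ 0`, so on the cube it is at most its value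
at `x = 1`, the row sum that A7a bounds by `1 / h`.
-/

theorem add_mul_neg_mul_add_sub_mul_mem_Icc {y h d s : ℝ} (hy : y ∈ Set.Icc (0 : ℝ) 1)
    (hd : h * d ∈ Set.Icc (0 : ℝ) 1) (hs : h * s ∈ Set.Icc (0 : ℝ) 1) :
    y + h * (-(d * y) + (1 - y) * s) ∈ Set.Icc (0 : ℝ) 1 := by
  obtain ⟨hy0, hy1⟩ := hy
  obtain ⟨hd0, hd1⟩ := hd
  obtain ⟨hs0, hs1⟩ := hs
  have hstep : y + h * (-(d * y) + (1 - y) * s) = (1 - h * d) * y + (1 - y) * (h * s) := by ring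
  rw [hstep]
  constructor
  · nlinarith [mul_nonneg (sub_nonneg.2 hd1) hy0, mul_nonneg (sub_nonneg.2 hy1) hs0]
  · nlinarith [mul_nonneg hd0 hy0, mul_le_of_le_one_right (sub_nonneg.2 hy1) hs1]

section InfectionPressure

variable {n : ℕ} (B : Matrix (Fin n) (Fin n) ℝ)
  (T : (k : ℕ) → Fin n → (Fin (k - 1) → Fin n) → ℝ)

def infectionPressure (x : Fin n → ℝ) (i : Fin n) : ℝ :=
  (∑ j, B i j * x j) + ∑ k ∈ Icc 3 n, ∑ v : Fin (k - 1) → Fin n, T k i v * ∏ m, x (v m)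

theorem hoSIS_apply (h : ℝ) (δ : Fin n → ℝ) (x : Fin n → ℝ) (i : Fin n) :
    hoSIS h δ B T x i = x i + h * (-(δ i * x i) + (1 - x i) * infectionPressure B T x i) :=
  rfl

variable {B T}

theorem infectionPressure_nonneg (hB : ∀ i j, 0 ≤ B i j)
    (hT : ∀ k ∈ Icc 3 n, ∀ i, ∀ v : Fin (k - 1) → Fin n, 0 ≤ T k i v)
    {x : Fin n → ℝ} (hx : 0 ≤ x) (i : Fin n) : 0 ≤ infectionPressure B T x i :=
  add_nonneg (sum_nonneg fun j _ => mul_nonneg (hB i j) (hx j))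
    (sum_nonneg fun k hk => sum_nonneg fun v _ =>
      mul_nonneg (hT k hk i v) (prod_nonneg fun m _ => hx (v m)))

theorem infectionPressure_mono (hB : ∀ i j, 0 ≤ B i j)
    (hT : ∀ k ∈ Icc 3 n, ∀ i, ∀ v : Fin (k - 1) → Fin n, 0 ≤ T k i v)
    {x y : Fin n → ℝ} (hx : 0 ≤ x) (hxy : x ≤ y) (i : Fin n) :
    infectionPressure B T x i ≤ infectionPressure B T y i :=
  add_le_add
    (sum_le_sum fun j _ => mul_le_mul_of_nonneg_left (hxy j) (hB i j))
    (sum_le_sum fun k hk => sum_le_sum fun v _ =>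
      mul_le_mul_of_nonneg_left (prod_le_prod (fun m _ => hx (v m)) fun m _ => hxy (v m))
        (hT k hk i v))

theorem infectionPressure_one (i : Fin n) :
    infectionPressure B T 1 i =
      (∑ j, B i j) + ∑ k ∈ Icc 3 n, ∑ v : Fin (k - 1) → Fin n, T k i v := by
  simp only [infectionPressure, Pi.one_apply, mul_one, prod_const_one]

end InfectionPressure

theorem InCube.nonneg {n : ℕ} {x : Fin n → ℝ} (hx : InCube x) : 0 ≤ x := fun i => (hx i).1

theorem InCube.le_one {n : ℕ} {x : Fin n → ℝ} (hx : InCube x) : x ≤ 1 := fun i => (hx i).2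

theorem InCube.hoSIS {n : ℕ} {h : ℝ} (hh : 0 ≤ h) {δ : Fin n → ℝ}
    {B : Matrix (Fin n) (Fin n) ℝ} {T : (k : ℕ) → Fin n → (Fin (k - 1) → Fin n) → ℝ}
    (hδ : ∀ i, 0 ≤ δ i) (hB : ∀ i j, 0 ≤ B i j)
    (hT : ∀ k ∈ Icc 3 n, ∀ i, ∀ v : Fin (k - 1) → Fin n, 0 ≤ T k i v)
    (hA7a : ∀ i, h * δ i ≤ 1 ∧
      h * ((∑ j, B i j) + ∑ k ∈ Icc 3 n, ∑ v : Fin (k - 1) → Fin n, T k i v) ≤ 1)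
    {x : Fin n → ℝ} (hx : InCube x) : InCube (hoSIS h δ B T x) := by
  intro i
  have hpressure : h * infectionPressure B T x i ∈ Set.Icc (0 : ℝ) 1 := by
    refine ⟨mul_nonneg hh (infectionPressure_nonneg hB hT hx.nonneg i), ?_⟩
    calc h * infectionPressure B T x i ≤ h * infectionPressure B T 1 i :=
          mul_le_mul_of_nonneg_left (infectionPressure_mono hB hT hx.nonneg hx.le_one i) hh
      _ ≤ 1 := by rw [infectionPressure_one]; exact (hA7a i).2
  rw [hoSIS_apply]
  exact add_mul_neg_mul_add_sub_mul_mem_Icc (hx i) ⟨mul_nonneg hh (hδ i), (hA7a i).1⟩ hpressure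

theorem stmt15_general {n : ℕ} (h : ℝ) (hh : 0 < h)
    (δ : Fin n → ℝ) (B : Matrix (Fin n) (Fin n) ℝ)
    (T : (k : ℕ) → Fin n → (Fin (k - 1) → Fin n) → ℝ)
    (hδ : ∀ i, 0 < δ i) (hB : ∀ i j, 0 ≤ B i j)
    (hT : ∀ k ∈ Finset.Icc 3 n, ∀ i, ∀ v : Fin (k - 1) → Fin n, 0 ≤ T k i v)
    (hA7a : ∀ i, h * δ i ≤ 1 ∧
      h * ((∑ j, B i j) + ∑ k ∈ Finset.Icc 3 n, ∑ v : Fin (k - 1) → Fin n, T k i v) ≤ 1)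
    (x : ℕ → Fin n → ℝ) (hx : IsTraj (hoSIS h δ B T) x) (h0 : InCube (x 0)) :
    ∀ t, InCube (x t) := by
  intro t
  induction t with
  | zero => exact h0
  | succ t ih => exact hx t ▸ ih.hoSIS hh.le (fun i => (hδ i).le) hB hT hA7a

/-- under Assumptions A2 and A7a, the cube `[0,1]^n` is positively
invariant under the general higher-order SIS map. -/
theorem stmt15 {n : ℕ} (hn : 3 ≤ n) (h : ℝ) (hh : 0 < h)
    (δ : Fin n → ℝ) (B : Matrix (Fin n) (Fin n) ℝ)
    (T : (k : ℕ) → Fin n → (Fin (k - 1) → Fin n) → ℝ)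
    (hδ : ∀ i, 0 < δ i) (hB : ∀ i j, 0 ≤ B i j)
    (hT : ∀ k ∈ Finset.Icc 3 n, ∀ i, ∀ v : Fin (k - 1) → Fin n, 0 ≤ T k i v)
    (hA2 : MatIrred B)
    (hA7a : ∀ i, h * δ i ≤ 1 ∧
      h * ((∑ j, B i j) + ∑ k ∈ Finset.Icc 3 n, ∑ v : Fin (k - 1) → Fin n, T k i v) ≤ 1)
    (x : ℕ → Fin n → ℝ) (hx : IsTraj (hoSIS h δ B T) x) (h0 : InCube (x 0)) :
    ∀ t, InCube (x t) :=
  stmt15_general h hh δ B T hδ hB hT hA7a x hx h0
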